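/- Let A be a real m×n matrix, b ∈ ℝ^m, and assume V = {v ∈ ℝ^n : A v ≥ b} is nonempty and bounded. Let (x^i, c^i), i = 1,…,N, be data with x^i ∈ ℝ^K and c^i ∈ ℝ^n, and for ω ∈ ℝ^{n×K} define the pessimistic regret Regret(ω) = sup{(1/N) Σ_{i=1}^N (c^i · v^i − z*(c^i)) : v^i ∈ V*(ω x^i) for each i}. Then the minimum pessimistic regret is attained: there exists ω* ∈ ℝ^{n×K} with Regret(ω*) ≤ Regret(ω) for all ω ∈ ℝ^{n×K}. -/

import Mathlib

open Matrix Set BigOperators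

noncomputable section

/-- The polyhedron `V = {v : A v ≥ b}` (inequalities entrywise). -/
def polyV {m n : ℕ} (A : Matrix (Fin m) (Fin n) ℝ) (b : Fin m → ℝ) : Set (Fin n → ℝ) :=
  {v | b ≤ A.mulVec v}

/-- `z*(c)`: the optimal (infimum) value of `c · v` over `V`. -/
noncomputable def zstar {m n : ℕ} (A : Matrix (Fin m) (Fin n) ℝ) (b : Fin m → ℝ)
    (c : Fin n → ℝ) : ℝ :=
  sInf ((fun v => c ⬝ᵥ v) '' polyV A b)

/-- `V*(c)`: the set of optimal solutions of `min {c · v : v ∈ V}`. -/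
def Vstar {m n : ℕ} (A : Matrix (Fin m) (Fin n) ℝ) (b : Fin m → ℝ)
    (c : Fin n → ℝ) : Set (Fin n → ℝ) :=
  {v ∈ polyV A b | c ⬝ᵥ v = zstar A b c}

/-- The pessimistic regret of the linear model `ω`. -/
noncomputable def pessRegret {m n N K : ℕ} (A : Matrix (Fin m) (Fin n) ℝ) (b : Fin m → ℝ)
    (x : Fin N → Fin K → ℝ) (c : Fin N → Fin n → ℝ)
    (ω : Matrix (Fin n) (Fin K) ℝ) : ℝ :=
  sSup {r : ℝ | ∃ v : Fin N → Fin n → ℝ,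
    (∀ i, v i ∈ Vstar A b (ω.mulVec (x i))) ∧
    r = (1 / (N : ℝ)) * ∑ i, (c i ⬝ᵥ v i - zstar A b (c i))}

/-! An extreme point of `V` is determined by its set of active constraints, so `V` has finitely
many extreme points. For every `ω`, the optimal set `V*(ω xⁱ)` is an exposed face of `V`, and the
pessimistic choice `vⁱ` maximising `cⁱ · v` over it can be taken at an extreme point of that face,
hence of `V`. So `Regret(ω)` always lies in the finite set of values
`(1/N) Σ (cⁱ · wⁱ - z*(cⁱ))` with every `wⁱ` an extreme point of `V`, and a function with finite
range attains its minimum. -/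

open Filter Topology

lemma IsCompact.exists_mem_extremePoints_mem_toExposed {E : Type*} [AddCommGroup E] [Module ℝ E]
    [TopologicalSpace E] [T2Space E] [IsTopologicalAddGroup E] [ContinuousSMul ℝ E]
    [LocallyConvexSpace ℝ E] {s : Set E} (hs : IsCompact s) (hne : s.Nonempty)
    (l : StrongDual ℝ E) : ∃ x ∈ s.extremePoints ℝ, x ∈ l.toExposed s := by
  have hexp := ContinuousLinearMap.toExposed.isExposed (l := l) (A := s)
  obtain ⟨y, hy, hmax⟩ := hs.exists_isMaxOn hne l.continuous.continuousOn
  obtain ⟨x, hx⟩ := (hexp.isCompact hs).extremePoints_nonempty ⟨y, hy, fun z hz => hmax hz⟩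
  exact ⟨x, hexp.isExtreme.extremePoints_subset_extremePoints hx, extremePoints_subset hx⟩

def dotProductCLM {n : ℕ} (d : Fin n → ℝ) : StrongDual ℝ (Fin n → ℝ) :=
  LinearMap.toContinuousLinearMap (dotProductBilin ℝ ℝ d)

lemma dotProductCLM_apply {n : ℕ} (d v : Fin n → ℝ) : dotProductCLM d v = d ⬝ᵥ v := rfl

section Polyhedron

variable {m n : ℕ} {A : Matrix (Fin m) (Fin n) ℝ} {b : Fin m → ℝ}

lemma isClosed_polyV (A : Matrix (Fin m) (Fin n) ℝ) (b : Fin m → ℝ) : IsClosed (polyV A b) :=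
  isClosed_Ici.preimage (continuous_const.matrix_mulVec continuous_id)

lemma isCompact_polyV (hbd : Bornology.IsBounded (polyV A b)) : IsCompact (polyV A b) :=
  Metric.isCompact_of_isClosed_isBounded (isClosed_polyV A b) hbd

lemma eventually_add_smul_mem_polyV {v : Fin n → ℝ} (hv : v ∈ polyV A b) {u : Fin n → ℝ}
    (hu : ∀ i, (A *ᵥ v) i = b i → (A *ᵥ u) i = 0) :
    ∀ᶠ t : ℝ in 𝓝 0, v + t • u ∈ polyV A b := by
  refine eventually_all.2 fun i => ?_
  simp only [mulVec_add, mulVec_smul, Pi.add_apply, Pi.smul_apply, smul_eq_mul]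
  rcases (hv i).eq_or_lt with hact | hslack
  · simp [hu i hact.symm, hv i]
  · exact (continuousAt_const.eventually_lt (by fun_prop) (by simpa using hslack)).mono
      fun t ht => ht.le

lemma eq_zero_of_mem_extremePoints_polyV {v : Fin n → ℝ}
    (hv : v ∈ (polyV A b).extremePoints ℝ) {u : Fin n → ℝ}
    (hu : ∀ i, (A *ᵥ v) i = b i → (A *ᵥ u) i = 0) : u = 0 := by
  -- `v` is the midpoint of `v ± t • u`, both feasible for small `t`.
  have hpm : ∀ᶠ t : ℝ in 𝓝 0, v + t • u ∈ polyV A b ∧ v + (-t) • u ∈ polyV A b :=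
    have h := eventually_add_smul_mem_polyV hv.1 hu
    h.and ((continuous_neg.tendsto' 0 0 neg_zero).eventually h)
  obtain ⟨t, ⟨hplus, hminus⟩, ht⟩ := ((hpm.filter_mono nhdsWithin_le_nhds).and
    (self_mem_nhdsWithin : {0}ᶜ ∈ 𝓝[≠] (0 : ℝ))).exists
  have hmid : v ∈ openSegment ℝ (v + t • u) (v + (-t) • u) :=
    ⟨1 / 2, 1 / 2, by norm_num, by norm_num, by norm_num, by module⟩
  have htu : t • u = 0 := by simpa using hv.2 hplus hminus hmid
  exact (smul_eq_zero.1 htu).resolve_left ht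

lemma finite_extremePoints_polyV (A : Matrix (Fin m) (Fin n) ℝ) (b : Fin m → ℝ) :
    ((polyV A b).extremePoints ℝ).Finite := by
  refine Set.Finite.of_finite_image (f := fun v => {i | (A *ᵥ v) i = b i}) (Set.toFinite _) ?_
  intro v hv v' _ hactive
  refine sub_eq_zero.1 (eq_zero_of_mem_extremePoints_polyV hv fun i hi => ?_)
  have hi' : (A *ᵥ v') i = b i := (Set.ext_iff.1 hactive i).1 hi
  simp [mulVec_sub, hi, hi']

-- `zstar` is an `sInf`: boundedness is what makes it the minimum rather than a junk value.
lemma Vstar_eq_toExposed (hbd : Bornology.IsBounded (polyV A b)) (d : Fin n → ℝ) :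
    Vstar A b d = (dotProductCLM (-d)).toExposed (polyV A b) := by
  have hcpt := isCompact_polyV hbd
  ext v
  simp only [Vstar, ContinuousLinearMap.toExposed, dotProductCLM_apply, neg_dotProduct,
    neg_le_neg_iff, Set.mem_ofPred_eq]
  refine and_congr_right fun hv => ⟨fun hz y hy => ?_, fun hmin => ?_⟩
  · rw [hz]
    exact csInf_le (hcpt.image (continuous_const.dotProduct continuous_id)).bddBelow
      (Set.mem_image_of_mem _ hy)
  · refine (IsLeast.csInf_eq (s := (fun w => d ⬝ᵥ w) '' polyV A b) ⟨⟨v, hv, rfl⟩, ?_⟩).symm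
    rintro _ ⟨y, hy, rfl⟩
    exact hmin y hy

lemma exists_mem_extremePoints_isMaxOn_Vstar (hne : (polyV A b).Nonempty)
    (hbd : Bornology.IsBounded (polyV A b)) (d c : Fin n → ℝ) :
    ∃ w ∈ (polyV A b).extremePoints ℝ, w ∈ Vstar A b d ∧ ∀ v ∈ Vstar A b d, c ⬝ᵥ v ≤ c ⬝ᵥ w := by
  have hcpt := isCompact_polyV hbd
  have hface : IsExposed ℝ (polyV A b) (Vstar A b d) :=
    Vstar_eq_toExposed hbd d ▸ ContinuousLinearMap.toExposed.isExposed
  obtain ⟨v₀, -, hv₀⟩ := hcpt.exists_mem_extremePoints_mem_toExposed hne (dotProductCLM (-d))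
  obtain ⟨w, hw, hwmax⟩ := (hface.isCompact hcpt).exists_mem_extremePoints_mem_toExposed
    ⟨v₀, Vstar_eq_toExposed hbd d ▸ hv₀⟩ (dotProductCLM c)
  exact ⟨w, hface.isExtreme.extremePoints_subset_extremePoints hw, hwmax.1, hwmax.2⟩

variable {N K : ℕ}

lemma pessRegret_mem_image (hne : (polyV A b).Nonempty) (hbd : Bornology.IsBounded (polyV A b))
    (x : Fin N → Fin K → ℝ) (c : Fin N → Fin n → ℝ) (ω : Matrix (Fin n) (Fin K) ℝ) :
    pessRegret A b x c ω ∈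
      (fun v : Fin N → Fin n → ℝ => 1 / (N : ℝ) * ∑ i, (c i ⬝ᵥ v i - zstar A b (c i))) ''
        Set.univ.pi fun _ => (polyV A b).extremePoints ℝ := by
  choose w hwext hw hwmax using
    fun i => exists_mem_extremePoints_isMaxOn_Vstar hne hbd (ω *ᵥ x i) (c i)
  refine ⟨w, fun i _ => hwext i, ?_⟩
  unfold pessRegret
  refine (IsGreatest.csSup_eq ?_).symm
  refine ⟨⟨w, hw, rfl⟩, ?_⟩
  rintro _ ⟨v, hv, rfl⟩
  dsimp only
  gcongr with i
  exact hwmax i _ (hv i)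

lemma finite_range_pessRegret (hne : (polyV A b).Nonempty)
    (hbd : Bornology.IsBounded (polyV A b)) (x : Fin N → Fin K → ℝ) (c : Fin N → Fin n → ℝ) :
    (Set.range (pessRegret A b x c)).Finite :=
  ((Set.Finite.pi fun _ => finite_extremePoints_polyV A b).image _).subset
    (Set.range_subset_iff.2 (pessRegret_mem_image hne hbd x c))

end Polyhedron

theorem stmt_2 (m n N K : ℕ)
    (A : Matrix (Fin m) (Fin n) ℝ) (b : Fin m → ℝ)
    (hne : (polyV A b).Nonempty) (hbd : Bornology.IsBounded (polyV A b))
    (x : Fin N → Fin K → ℝ) (c : Fin N → Fin n → ℝ) :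
    ∃ ωstar : Matrix (Fin n) (Fin K) ℝ,
      ∀ ω : Matrix (Fin n) (Fin K) ℝ,
        pessRegret A b x c ωstar ≤ pessRegret A b x c ω := by
  obtain ⟨_, ⟨ωstar, rfl⟩, hmin⟩ := Set.exists_min_image _ id
    (finite_range_pessRegret hne hbd x c) (Set.range_nonempty _)
  exact ⟨ωstar, fun ω => hmin _ ⟨ω, rfl⟩⟩
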